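/- Let r ∈ (0.2, 0.5), α ∈ (0, 0.5], β ∈ [0.15, 1), and set a = Φ⁻¹(α), b = Φ⁻¹(β). Then Φ((b − √r·a)/√(1−r)) ≥ (1/(2√r))·φ₂(a, b; √r); equivalently, the local prediction-access ratio satisfies lim_{Δ→0} PAR(α, β, Δ) ≥ 1. -/

import Mathlib

open Real MeasureTheory Filter Topology

/-- The standard normal density φ(x) = (2π)^{-1/2} exp(-x²/2). -/
noncomputable def stdNormalPDF (x : ℝ) : ℝ :=
  (Real.sqrt (2 * Real.pi))⁻¹ * Real.exp (-x ^ 2 / 2)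

/-- The standard normal CDF Φ(x) = ∫_{-∞}^x φ(u) du. -/
noncomputable def stdNormalCDF (x : ℝ) : ℝ :=
  ∫ u in Set.Iic x, stdNormalPDF u

/-- The standard bivariate normal density with correlation ρ. -/
noncomputable def biNormalPDF (x y ρ : ℝ) : ℝ :=
  (2 * Real.pi * Real.sqrt (1 - ρ ^ 2))⁻¹ *
    Real.exp (-(x ^ 2 - 2 * ρ * x * y + y ^ 2) / (2 * (1 - ρ ^ 2)))

/-- The standard bivariate normal CDF Φ₂(a, b; ρ). -/
noncomputable def biNormalCDF (a b ρ : ℝ) : ℝ :=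
  ∫ x in Set.Iic a, ∫ y in Set.Iic b, biNormalPDF x y ρ

/-- The inverse Φ⁻¹ of the standard normal CDF on (0,1). -/
noncomputable def stdNormalCDFInv (p : ℝ) : ℝ :=
  Function.invFun stdNormalCDF p

lemma sqrt2pi_pos : 0 < Real.sqrt (2 * Real.pi) :=
  Real.sqrt_pos.2 (by positivity)

lemma pdf_cont : Continuous stdNormalPDF := by
  unfold stdNormalPDF; continuity

lemma pdf_pos (x : ℝ) : 0 < stdNormalPDF x := by
  unfold stdNormalPDF; positivity

lemma pdf_le (x : ℝ) : stdNormalPDF x ≤ (Real.sqrt (2 * Real.pi))⁻¹ := by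
  unfold stdNormalPDF
  nlinarith [Real.exp_le_one_iff.2 (by nlinarith [sq_nonneg x] : -x ^ 2 / 2 ≤ 0),
    Real.exp_pos (-x ^ 2 / 2), inv_pos.2 sqrt2pi_pos]

lemma pdf_int : Integrable stdNormalPDF := by
  have h := (integrable_exp_neg_mul_sq (by norm_num : (0:ℝ) < 1/2)).const_mul
    (Real.sqrt (2 * Real.pi))⁻¹
  refine h.congr ?_
  · filter_upwards with x
    unfold stdNormalPDF; ring_nf

lemma pdf_total : ∫ x, stdNormalPDF x = 1 := by
  have h : (fun x : ℝ => stdNormalPDF x) =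
      fun x : ℝ => (Real.sqrt (2 * Real.pi))⁻¹ * Real.exp (-(1/2) * x ^ 2) := by
    funext x; unfold stdNormalPDF; ring_nf
  rw [show (∫ x, stdNormalPDF x) = ∫ x : ℝ, (Real.sqrt (2 * Real.pi))⁻¹ *
      Real.exp (-(1/2) * x ^ 2) from by rw [← h]]
  rw [integral_const_mul, integral_gaussian]
  rw [show Real.pi / (1/2) = 2 * Real.pi by ring]
  exact inv_mul_cancel₀ (ne_of_gt sqrt2pi_pos)

lemma cdf_sub (x y : ℝ) :
    stdNormalCDF y - stdNormalCDF x = ∫ u in x..y, stdNormalPDF u :=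
  intervalIntegral.integral_Iic_sub_Iic pdf_int.integrableOn pdf_int.integrableOn

lemma pdf_even (x : ℝ) : stdNormalPDF (-x) = stdNormalPDF x := by
  unfold stdNormalPDF; rw [neg_pow]; ring_nf

lemma cdf_neg (x : ℝ) : stdNormalCDF (-x) = 1 - stdNormalCDF x := by
  have h1 : stdNormalCDF (-x) = ∫ u in Set.Ioi x, stdNormalPDF u := by
    calc stdNormalCDF (-x) = ∫ u in Set.Ioi x, stdNormalPDF (-u) := by
          rw [integral_comp_neg_Ioi]; rfl
      _ = ∫ u in Set.Ioi x, stdNormalPDF u := by simp_rw [pdf_even]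
  have h2 := intervalIntegral.integral_Iic_add_Ioi (b := x)
    pdf_int.integrableOn pdf_int.integrableOn
  rw [pdf_total] at h2
  unfold stdNormalCDF at *
  linarith [h1, h2]

lemma cdf_zero : stdNormalCDF 0 = 1/2 := by
  have := cdf_neg 0
  rw [neg_zero] at this; linarith

lemma cdf_strictMono : StrictMono stdNormalCDF := by
  intro x y hxy
  have h := cdf_sub x y
  have hpos : 0 < ∫ u in x..y, stdNormalPDF u :=
    intervalIntegral.intervalIntegral_pos_of_pos
      (pdf_cont.intervalIntegrable x y) pdf_pos hxy
  linarith

lemma cdf_lipschitz : LipschitzWith 1 stdNormalCDF := by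
  refine LipschitzWith.of_dist_le_mul fun x y => ?_
  rw [Real.dist_eq, Real.dist_eq, cdf_sub y x]
  have hb : ∀ z ∈ Set.uIoc y x, ‖stdNormalPDF z‖ ≤ (Real.sqrt (2*Real.pi))⁻¹ := by
    intro z _; rw [Real.norm_eq_abs, abs_of_pos (pdf_pos z)]; exact pdf_le z
  have := intervalIntegral.norm_integral_le_of_norm_le_const hb
  rw [Real.norm_eq_abs] at this
  have h2pi : (1:ℝ) ≤ Real.sqrt (2*Real.pi) := by
    rw [show (1:ℝ) = Real.sqrt 1 from (Real.sqrt_one).symm]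
    exact Real.sqrt_le_sqrt (by nlinarith [Real.pi_gt_three])
  have hinv : (Real.sqrt (2*Real.pi))⁻¹ ≤ 1 := by
    rw [inv_le_one_iff₀]; right; exact h2pi
  have habs : (0:ℝ) ≤ |x - y| := abs_nonneg _
  have h3 : |∫ u in y..x, stdNormalPDF u| ≤ 1 * |x - y| := by nlinarith
  simpa using h3

lemma cdf_cont : Continuous stdNormalCDF := cdf_lipschitz.continuous

lemma cdf_tendsto_atTop : Tendsto stdNormalCDF atTop (𝓝 1) := by
  have h := (MeasureTheory.aecover_Iic (μ := volume)
      (tendsto_id : Tendsto (id : ℝ → ℝ) atTop atTop)).integral_tendsto_of_countably_generated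
      pdf_int
  rw [pdf_total] at h
  exact h

lemma cdf_tendsto_atBot : Tendsto stdNormalCDF atBot (𝓝 0) := by
  have h1 : Tendsto (fun x : ℝ => stdNormalCDF (-x)) atTop (𝓝 0) := by
    have : (fun x : ℝ => stdNormalCDF (-x)) = fun x => 1 - stdNormalCDF x := by
      funext x; exact cdf_neg x
    rw [this]
    have := cdf_tendsto_atTop
    have h2 : Tendsto (fun x : ℝ => 1 - stdNormalCDF x) atTop (𝓝 (1 - 1)) :=
      tendsto_const_nhds.sub this
    simpa using h2
  have := h1.comp (tendsto_neg_atBot_atTop : Tendsto (fun x : ℝ => -x) atBot atTop)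
  exact this.congr (fun x => by simp)

lemma cdf_surj (p : ℝ) (hp : p ∈ Set.Ioo (0:ℝ) 1) : ∃ x, stdNormalCDF x = p := by
  obtain ⟨x₁, hx₁⟩ := (cdf_tendsto_atBot.eventually (eventually_lt_nhds hp.1)).exists
  obtain ⟨x₂, hx₂⟩ := (cdf_tendsto_atTop.eventually (eventually_gt_nhds hp.2)).exists
  have := intermediate_value_univ x₁ x₂ cdf_cont
  exact this ⟨le_of_lt hx₁, le_of_lt hx₂⟩

lemma exp_neg_le (t : ℝ) (ht : 0 ≤ t) :
    Real.exp (-t) ≤ 1 - t + t^2/2 - t^3/6 + t^4/24 := by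
  have hB : 1 + t + t^2/2 + t^3/6 + t^4/24 ≤ Real.exp t := by
    have h := Real.sum_le_exp_of_nonneg ht 5
    simp [Finset.sum_range_succ, Nat.factorial] at h
    convert h using 1 <;> ring_nf
  have hBpos : 0 < 1 + t + t^2/2 + t^3/6 + t^4/24 := by positivity
  have h1 : Real.exp (-t) = (Real.exp t)⁻¹ := by rw [Real.exp_neg]
  rw [h1]
  have h2 : (Real.exp t)⁻¹ ≤ (1 + t + t^2/2 + t^3/6 + t^4/24)⁻¹ :=
    inv_anti₀ hBpos hB
  refine h2.trans ?_
  rw [inv_le_iff_one_le_mul₀ hBpos]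
  nlinarith [pow_nonneg ht 6, pow_nonneg ht 8]

lemma exp_neg_ge (t : ℝ) (h0 : 0 ≤ t) (h1 : t ≤ 1) :
    1 - t + t^2/2 - t^3/6 - 5*t^4/96 ≤ Real.exp (-t) := by
  have habs : |(-t)| ≤ 1 := by rw [abs_neg, abs_of_nonneg h0]; exact h1
  have h := Real.exp_bound habs (by norm_num : 0 < 4)
  have hsum : ∑ m ∈ Finset.range 4, (-t)^m / m.factorial = 1 - t + t^2/2 - t^3/6 := by
    simp [Finset.sum_range_succ, Nat.factorial]
    ring
  rw [hsum] at h
  have habs2 : |(-t)| = t := by rw [abs_neg, abs_of_nonneg h0]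
  rw [habs2] at h
  have h4 : (t:ℝ)^4 * (((4:ℕ).succ : ℝ) / (((4:ℕ).factorial : ℝ) * (4:ℕ))) ≤ 5*t^4/96 := by
    norm_num [Nat.factorial]
    linarith
  have := abs_le.1 h
  have h5 := this.1
  nlinarith [h5, h4]

lemma sqrt2pi_lb : 2.5066 ≤ Real.sqrt (2 * Real.pi) := by
  rw [show (2.5066:ℝ) = Real.sqrt (2.5066^2) from (Real.sqrt_sq (by norm_num)).symm]
  apply Real.sqrt_le_sqrt
  nlinarith [Real.pi_gt_d6]

lemma sqrt2pi_ub : Real.sqrt (2 * Real.pi) ≤ 2.50664 := by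
  rw [show (2.50664:ℝ) = Real.sqrt (2.50664^2) from (Real.sqrt_sq (by norm_num)).symm]
  apply Real.sqrt_le_sqrt
  nlinarith [Real.pi_lt_d6]

-- derivative of pdf
lemma pdf_hasDeriv (x : ℝ) :
    HasDerivAt stdNormalPDF (-x * stdNormalPDF x) x := by
  have h1 : HasDerivAt (fun x : ℝ => -x^2/2) (-x) x := by
    have := (hasDerivAt_pow 2 x).neg.div_const 2
    refine this.congr_deriv ?_
    simp; ring
  have h2 := (h1.exp).const_mul (Real.sqrt (2 * Real.pi))⁻¹
  refine h2.congr_deriv ?_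
  unfold stdNormalPDF; ring

lemma pdf_sub (x y : ℝ) :
    stdNormalPDF y - stdNormalPDF x = ∫ u in x..y, -u * stdNormalPDF u := by
  exact (intervalIntegral.integral_eq_sub_of_hasDerivAt
    (fun u _ => pdf_hasDeriv u)
    (((continuous_id.neg).mul pdf_cont).intervalIntegrable x y)).symm

-- polynomial antiderivative facts
lemma poly_hasDeriv_up (u : ℝ) :
    HasDerivAt (fun u : ℝ => u - u^3/6 + u^5/40 - u^7/336 + u^9/3456)
      (1 - u^2/2 + u^4/8 - u^6/48 + u^8/384) u := by
  have h := ((((hasDerivAt_id u).sub ((hasDerivAt_pow 3 u).div_const 6)).add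
    ((hasDerivAt_pow 5 u).div_const 40)).sub ((hasDerivAt_pow 7 u).div_const 336)).add
    ((hasDerivAt_pow 9 u).div_const 3456)
  refine h.congr_deriv ?_
  push_cast; ring

lemma poly_hasDeriv_lo (u : ℝ) :
    HasDerivAt (fun u : ℝ => u - u^3/6 + u^5/40 - u^7/336 - 5*u^9/13824)
      (1 - u^2/2 + u^4/8 - u^6/48 - 5*u^8/1536) u := by
  have h := ((((hasDerivAt_id u).sub ((hasDerivAt_pow 3 u).div_const 6)).add
    ((hasDerivAt_pow 5 u).div_const 40)).sub ((hasDerivAt_pow 7 u).div_const 336)).sub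
    (((hasDerivAt_pow 9 u).const_mul (5:ℝ)).div_const 13824)
  refine h.congr_deriv ?_
  push_cast; ring

lemma exp_int_upper :
    ∫ u in (-1.48:ℝ)..0, Real.exp (-u^2/2) ≤ 1.0808 := by
  have hmono : ∫ u in (-1.48:ℝ)..0, Real.exp (-u^2/2) ≤
      ∫ u in (-1.48:ℝ)..0, (1 - u^2/2 + u^4/8 - u^6/48 + u^8/384) := by
    apply intervalIntegral.integral_mono_on (by norm_num)
    · exact (Continuous.intervalIntegrable (by continuity) _ _)
    · exact (Continuous.intervalIntegrable (by continuity) _ _)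
    · intro u _
      have := exp_neg_le (u^2/2) (by positivity)
      calc Real.exp (-u^2/2) = Real.exp (-(u^2/2)) := by ring_nf
        _ ≤ 1 - u^2/2 + (u^2/2)^2/2 - (u^2/2)^3/6 + (u^2/2)^4/24 := this
        _ = 1 - u^2/2 + u^4/8 - u^6/48 + u^8/384 := by ring
  have hval : ∫ u in (-1.48:ℝ)..0, (1 - u^2/2 + u^4/8 - u^6/48 + u^8/384) =
      (0 - 0^3/6 + 0^5/40 - 0^7/336 + 0^9/3456) -
      ((-1.48) - (-1.48)^3/6 + (-1.48)^5/40 - (-1.48)^7/336 + (-1.48)^9/3456) := by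
    exact intervalIntegral.integral_eq_sub_of_hasDerivAt
      (fun u _ => poly_hasDeriv_up u)
      (Continuous.intervalIntegrable (by continuity) _ _)
  rw [hval] at hmono
  refine hmono.trans ?_
  norm_num

lemma exp_int_lower :
    (0.8785:ℝ) ≤ ∫ u in (-1.04:ℝ)..0, Real.exp (-u^2/2) := by
  have hmono : ∫ u in (-1.04:ℝ)..0, (1 - u^2/2 + u^4/8 - u^6/48 - 5*u^8/1536) ≤
      ∫ u in (-1.04:ℝ)..0, Real.exp (-u^2/2) := by
    apply intervalIntegral.integral_mono_on (by norm_num)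
    · exact (Continuous.intervalIntegrable (by continuity) _ _)
    · exact (Continuous.intervalIntegrable (by continuity) _ _)
    · intro u hu
      have hu2 : u^2/2 ≤ 1 := by
        rcases hu with ⟨h1, h2⟩
        nlinarith
      have := exp_neg_ge (u^2/2) (by positivity) hu2
      calc (1 - u^2/2 + u^4/8 - u^6/48 - 5*u^8/1536 : ℝ)
          = 1 - u^2/2 + (u^2/2)^2/2 - (u^2/2)^3/6 - 5*(u^2/2)^4/96 := by ring
        _ ≤ Real.exp (-(u^2/2)) := this
        _ = Real.exp (-u^2/2) := by ring_nf
  have hval : ∫ u in (-1.04:ℝ)..0, (1 - u^2/2 + u^4/8 - u^6/48 - 5*u^8/1536) =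
      (0 - 0^3/6 + 0^5/40 - 0^7/336 - 5*0^9/13824) -
      ((-1.04) - (-1.04)^3/6 + (-1.04)^5/40 - (-1.04)^7/336 - 5*(-1.04)^9/13824) := by
    exact intervalIntegral.integral_eq_sub_of_hasDerivAt
      (fun u _ => poly_hasDeriv_lo u)
      (Continuous.intervalIntegrable (by continuity) _ _)
  rw [hval] at hmono
  refine le_trans ?_ hmono
  norm_num

lemma cdf_pdf_int (x y : ℝ) :
    stdNormalCDF y - stdNormalCDF x
      = (Real.sqrt (2 * Real.pi))⁻¹ * ∫ u in x..y, Real.exp (-u^2/2) := by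
  rw [cdf_sub x y]
  unfold stdNormalPDF
  exact intervalIntegral.integral_const_mul _ _

lemma exp_10952_ub : Real.exp (-((-1.48:ℝ))^2/2) ≤ 0.33480 := by
  have h1 : (-((-1.48:ℝ))^2/2) = -(1.0952 : ℝ) := by norm_num
  rw [h1, Real.exp_neg]
  have hB : (2.9869:ℝ) ≤ Real.exp 1.0952 := by
    have h := Real.sum_le_exp_of_nonneg (by norm_num : (0:ℝ) ≤ 1.0952) 6
    simp [Finset.sum_range_succ, Nat.factorial] at h
    norm_num at h ⊢
    linarith
  calc (Real.exp 1.0952)⁻¹ ≤ (2.9869:ℝ)⁻¹ := by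
        apply inv_anti₀ (by norm_num) hB
    _ ≤ 0.33480 := by norm_num

lemma cdf_148 : (1/2) * stdNormalPDF (-1.48) ≤ stdNormalCDF (-1.48) := by
  have hsub := cdf_pdf_int (-1.48) 0
  rw [cdf_zero] at hsub
  set S := Real.sqrt (2 * Real.pi) with hS
  have hSpos : 0 < S := sqrt2pi_pos
  have hSinv_ub : S⁻¹ ≤ (2.5066:ℝ)⁻¹ := inv_anti₀ (by norm_num) sqrt2pi_lb
  have hSinv_pos : 0 < S⁻¹ := inv_pos.2 hSpos
  have hIpos : 0 ≤ ∫ u in (-1.48:ℝ)..0, Real.exp (-u^2/2) :=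
    intervalIntegral.integral_nonneg (by norm_num) (fun u _ => (Real.exp_pos _).le)
  have hIub := exp_int_upper
  have h1 : S⁻¹ * (∫ u in (-1.48:ℝ)..0, Real.exp (-u^2/2)) ≤ (2.5066:ℝ)⁻¹ * 1.0808 :=
    mul_le_mul hSinv_ub hIub hIpos (by norm_num)
  have h2 : stdNormalPDF (-1.48) ≤ (2.5066:ℝ)⁻¹ * 0.33480 := by
    unfold stdNormalPDF
    rw [← hS]
    exact mul_le_mul hSinv_ub exp_10952_ub (Real.exp_pos _).le (by norm_num)
  have hΦ : stdNormalCDF (-1.48) = 1/2 - S⁻¹ * ∫ u in (-1.48:ℝ)..0, Real.exp (-u^2/2) := by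
    linarith
  rw [hΦ]
  norm_num at h1 h2 ⊢
  linarith

lemma cdf_104 : stdNormalCDF (-1.04) ≤ 0.15 := by
  have hsub := cdf_pdf_int (-1.04) 0
  rw [cdf_zero] at hsub
  set S := Real.sqrt (2 * Real.pi) with hS
  have hSpos : 0 < S := sqrt2pi_pos
  have hSinv_lb : (2.50664:ℝ)⁻¹ ≤ S⁻¹ := inv_anti₀ hSpos sqrt2pi_ub
  have h1 : (2.50664:ℝ)⁻¹ * 0.8785 ≤ S⁻¹ * ∫ u in (-1.04:ℝ)..0, Real.exp (-u^2/2) :=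
    mul_le_mul hSinv_lb exp_int_lower (by norm_num) (inv_pos.2 hSpos).le
  have hΦ : stdNormalCDF (-1.04) = 1/2 - S⁻¹ * ∫ u in (-1.04:ℝ)..0, Real.exp (-u^2/2) := by
    linarith
  rw [hΦ]
  norm_num at h1 ⊢
  linarith

lemma cdf_key (c : ℝ) (hc : (-1.48:ℝ) ≤ c) :
    (1/2) * stdNormalPDF c ≤ stdNormalCDF c := by
  have h1 := cdf_sub (-1.48) c
  have h2 := pdf_sub (-1.48) c
  have hint1 : IntervalIntegrable stdNormalPDF volume (-1.48) c :=
    pdf_cont.intervalIntegrable _ _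
  have hint2 : IntervalIntegrable (fun u => (1/2 : ℝ) * (-u * stdNormalPDF u)) volume (-1.48) c :=
    (continuous_const.mul ((continuous_id.neg).mul pdf_cont)).intervalIntegrable _ _
  have h3 : 0 ≤ ∫ u in (-1.48:ℝ)..c,
      (stdNormalPDF u - (1/2 : ℝ) * (-u * stdNormalPDF u)) := by
    apply intervalIntegral.integral_nonneg hc
    intro u hu
    have hp := pdf_pos u
    have hu1 : (-1.48:ℝ) ≤ u := hu.1
    nlinarith
  have h4 : ∫ u in (-1.48:ℝ)..c, (stdNormalPDF u - (1/2 : ℝ) * (-u * stdNormalPDF u)) =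
      (∫ u in (-1.48:ℝ)..c, stdNormalPDF u)
        - (1/2 : ℝ) * ∫ u in (-1.48:ℝ)..c, -u * stdNormalPDF u := by
    rw [intervalIntegral.integral_sub hint1 hint2]
    congr 1
    exact intervalIntegral.integral_const_mul _ _
  have h148 := cdf_148
  linarith [h3, h4, h1, h2, h148]

lemma cdf_inv_eq (p : ℝ) (hp : p ∈ Set.Ioo (0:ℝ) 1) :
    stdNormalCDF (stdNormalCDFInv p) = p :=
  Function.invFun_eq (cdf_surj p hp)


lemma main_ineq (r a b : ℝ) (hr1 : (1:ℝ)/5 < r) (hr2 : r < 1/2)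
    (ha0 : a ≤ 0) (hb0 : (-1.04:ℝ) ≤ b) :
    stdNormalCDF ((b - Real.sqrt r * a) / Real.sqrt (1 - r)) ≥
      (1 / (2 * Real.sqrt r)) * biNormalPDF a b (Real.sqrt r) := by
  norm_num at hb0
  have hr0 : (0:ℝ) < r := by linarith
  set ρ := Real.sqrt r with hρdef
  have hρpos : 0 < ρ := Real.sqrt_pos.2 hr0
  have hρ2 : ρ^2 = r := Real.sq_sqrt hr0.le
  set s := Real.sqrt (1-r) with hsdef
  have hspos : 0 < s := Real.sqrt_pos.2 (by linarith)
  have hs2 : s^2 = 1-r := Real.sq_sqrt (by linarith)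
  set c := (b - ρ*a)/s with hcdef
  clear_value ρ s
  -- identity
  have hsq2 : Real.sqrt (1 - ρ^2) = s := by rw [hρ2, hsdef]
  have hprod : Real.sqrt (2*Real.pi) * Real.sqrt (2*Real.pi) = 2*Real.pi :=
    Real.mul_self_sqrt (by positivity)
  have hcsq : c^2 = (b - ρ*a)^2/(1-r) := by rw [hcdef, div_pow, hs2]
  have hident : biNormalPDF a b ρ = s⁻¹ * (stdNormalPDF a * stdNormalPDF c) := by
    unfold biNormalPDF stdNormalPDF
    rw [hsq2]
    have hexpand : (b - ρ*a)^2 = b^2 - 2*ρ*a*b + r*a^2 := by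
      rw [← hρ2]; ring
    have hE : -(a^2 - 2*ρ*a*b + b^2)/(2*(1-ρ^2)) = -a^2/2 + -c^2/2 := by
      rw [hρ2, hcsq, hexpand]
      have h1r : (1:ℝ) - r ≠ 0 := by linarith
      field_simp
      ring
    rw [hE, Real.exp_add]
    have h2pi : (2*Real.pi)⁻¹ = (Real.sqrt (2*Real.pi))⁻¹ * (Real.sqrt (2*Real.pi))⁻¹ := by
      rw [← mul_inv, hprod]
    have hconst : (2*Real.pi*s)⁻¹ =
        s⁻¹ * ((Real.sqrt (2*Real.pi))⁻¹ * (Real.sqrt (2*Real.pi))⁻¹) := by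
      rw [mul_inv, h2pi]
      ring
    rw [hconst]
    ring
  -- RHS bound
  have hρs : (0.4:ℝ) ≤ ρ*s := by
    have hm : ρ*s = Real.sqrt (r*(1-r)) := by
      rw [hρdef, hsdef]; exact (Real.sqrt_mul hr0.le _).symm
    have h16 : (0.16:ℝ) ≤ r*(1-r) := by nlinarith
    rw [hm, show (0.4:ℝ) = Real.sqrt 0.16 from by
      rw [show (0.16:ℝ) = 0.4^2 by norm_num, Real.sqrt_sq]; norm_num]
    exact Real.sqrt_le_sqrt h16
  have hφa4 : stdNormalPDF a ≤ 0.4 := by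
    refine (pdf_le a).trans ?_
    have := inv_anti₀ (by norm_num : (0:ℝ) < 2.5066) sqrt2pi_lb
    refine this.trans ?_
    norm_num
  have hRHS : 1/(2*ρ) * biNormalPDF a b ρ ≤ (1/2) * stdNormalPDF c := by
    rw [hident]
    have hφc := (pdf_pos c).le
    have hkey : stdNormalPDF a / (2*(ρ*s)) ≤ 1/2 := by
      rw [div_le_iff₀ (by linarith : (0:ℝ) < 2*(ρ*s))]
      norm_num at hφa4 ⊢
      linarith
    calc 1/(2*ρ) * (s⁻¹ * (stdNormalPDF a * stdNormalPDF c))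
        = stdNormalPDF c * (stdNormalPDF a / (2*(ρ*s))) := by
          field_simp
      _ ≤ stdNormalPDF c * (1/2) := mul_le_mul_of_nonneg_left hkey hφc
      _ = (1/2) * stdNormalPDF c := by ring
  -- c lower bound
  have hcge : (-1.48:ℝ) ≤ c := by
    have hρa : 0 ≤ ρ * (-a) := mul_nonneg hρpos.le (neg_nonneg.2 ha0)
    have hnum : (-1.04:ℝ) ≤ b - ρ*a := by linarith
    have hs_lb : (0.707:ℝ) ≤ s := by
      rw [hsdef, show (0.707:ℝ) = Real.sqrt (0.707^2) from (Real.sqrt_sq (by norm_num)).symm]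
      apply Real.sqrt_le_sqrt
      nlinarith
    by_contra h
    push_neg at h
    have hbs : b - ρ*a = c * s := by rw [hcdef]; field_simp
    have hA : c * s < -1.48 * s := by
      have := mul_lt_mul_of_pos_right h hspos
      linarith
    have hB : (-1.48:ℝ) * s ≤ -1.48 * 0.707 := by linarith
    norm_num at hA hB
    linarith
  have hfinal := cdf_key c hcge
  calc (1 / (2 * ρ)) * biNormalPDF a b ρ ≤ (1/2) * stdNormalPDF c := hRHS
    _ ≤ stdNormalCDF c := hfinal

/-- Let r ∈ (0.2, 0.5), α ∈ (0, 0.5], β ∈ [0.15, 1), and set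
a = Φ⁻¹(α), b = Φ⁻¹(β). Then
Φ((b − √r·a)/√(1−r)) ≥ (1/(2√r))·φ₂(a, b; √r); equivalently, the local
prediction-access ratio satisfies lim_{Δ→0} PAR(α, β, Δ) ≥ 1. -/
theorem local_PAR_ge_one_case2 (r α β : ℝ)
    (hr : r ∈ Set.Ioo (0.2 : ℝ) 0.5) (hα : α ∈ Set.Ioc (0 : ℝ) 0.5)
    (hβ : β ∈ Set.Ico (0.15 : ℝ) 1)
    (a b : ℝ) (ha : a = stdNormalCDFInv α) (hb : b = stdNormalCDFInv β) :
    stdNormalCDF ((b - Real.sqrt r * a) / Real.sqrt (1 - r)) ≥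
      (1 / (2 * Real.sqrt r)) * biNormalPDF a b (Real.sqrt r) := by
  obtain ⟨hr1, hr2⟩ := hr
  obtain ⟨hα1, hα2⟩ := hα
  obtain ⟨hβ1, hβ2⟩ := hβ
  norm_num at hr1 hr2 hα2 hβ1
  have hΦa : stdNormalCDF a = α := by
    rw [ha]; exact cdf_inv_eq α ⟨hα1, by linarith⟩
  have hΦb : stdNormalCDF b = β := by
    rw [hb]; exact cdf_inv_eq β ⟨by linarith, hβ2⟩
  have ha0 : a ≤ 0 := by
    by_contra h
    push_neg at h
    have := cdf_strictMono h
    rw [cdf_zero, hΦa] at this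
    linarith
  have hb0 : (-1.04:ℝ) ≤ b := by
    by_contra h
    push_neg at h
    have h2 := cdf_strictMono h
    rw [hΦb] at h2
    have h3 := cdf_104
    norm_num at h3
    linarith
  exact main_ineq r a b hr1 hr2 ha0 hb0
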